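/- Fix a real number R > 0. With Γ₃(a) = π^{3/2} Γ(a) Γ(a − 1/2) Γ(a − 1), B(k) = 8 π^{3k²} R^{6k²} / (Γ₃(k²) · (2k²)³), and V(k) = √k · (2π)^{k²/2 + k/2 − 1} / ∏_{j=1}^{k−1} j!, one has lim_{k→∞} (log (B(k)/V(k))) / (k² · log k) = −11/2. -/

import Mathlib

/-!
Take logarithms. Each of the three Gamma factors of `Γ₃(k²)` lies, by monotonicity of `Γ` on
`[2, ∞)`, between `(k² - 2)!` and `(k² - 1)!`, and `j log n - n ≤ log j! ≤ j log n` for `j ≤ n`;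
hence `log B(k) = -6 k² log k + O(k²)`. The same bounds give
`∑_{j<k} log j! = (k²/2) log k + O(k²)`, so `log V(k) = -(1/2) k² log k + O(k²)`.
As `k² = o(k² log k)`, the ratio tends to `-6 + 1/2 = -11/2`.
-/

open Filter Real

/-- The multivariate gamma function `Γ₃(a) = π^{3/2} Γ(a) Γ(a − 1/2) Γ(a − 1)`. -/
noncomputable def Gamma3 (a : ℝ) : ℝ :=
  π ^ ((3 : ℝ) / 2) * Real.Gamma a * Real.Gamma (a - 1 / 2) * Real.Gamma (a - 1)

/-- `B(k) = 8 π^{3k²} R^{6k²} / (Γ₃(k²) (2k²)³)`, the leading ball-volume expression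
in `O(3,2k²)/(O(3)×O(2k²))`. -/
noncomputable def ballVol (R : ℝ) (k : ℕ) : ℝ :=
  8 * π ^ (3 * (k : ℝ) ^ 2) * R ^ (6 * (k : ℝ) ^ 2)
    / (Gamma3 ((k : ℝ) ^ 2) * (2 * (k : ℝ) ^ 2) ^ 3)

/-- `V(k) = √k (2π)^{k²/2 + k/2 − 1} / ∏_{j=1}^{k−1} j!`, the volume of `SU(k)`. -/
noncomputable def suVol (k : ℕ) : ℝ :=
  Real.sqrt (k : ℝ) * (2 * π) ^ ((k : ℝ) ^ 2 / 2 + (k : ℝ) / 2 - 1)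
    / ∏ j ∈ Finset.Icc 1 (k - 1), (Nat.factorial j : ℝ)

open Asymptotics Topology
open scoped Nat

lemma log_factorial_le_mul_log {j n : ℕ} (h : j ≤ n) : log (j ! : ℝ) ≤ j * log n := by
  rw [← log_pow]
  apply log_le_log (by positivity)
  exact_mod_cast (Nat.factorial_le_pow j).trans (Nat.pow_le_pow_left h j)

lemma mul_log_sub_le_log_factorial {j n : ℕ} (h : j ≤ n) : j * log n - n ≤ log (j ! : ℝ) := by
  rcases Nat.eq_zero_or_pos j with rfl | hj
  · simp
  have hj₀ : (0 : ℝ) < j := by exact_mod_cast hj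
  have hjn : (j : ℝ) ≤ n := by exact_mod_cast h
  have hn₀ : (0 : ℝ) < n := hj₀.trans_le hjn
  have hratio : j * (log n - log j) ≤ n - j := by
    rw [← log_div hn₀.ne' hj₀.ne']
    calc j * log (n / j) ≤ j * (n / j - 1) :=
          mul_le_mul_of_nonneg_left (log_le_sub_one_of_pos (div_pos hn₀ hj₀)) hj₀.le
      _ = n - j := by field_simp
  have hstirling := Stirling.le_log_factorial_stirling hj.ne'
  have hlog_j : 0 ≤ log (j : ℝ) := log_nonneg (by exact_mod_cast hj)
  have hlog_two_pi : 0 ≤ log (2 * π) := log_nonneg (by linarith [pi_gt_three])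
  linarith

lemma log_Gamma_sub_bounds {n : ℕ} (hn : 3 ≤ n) {c : ℝ} (hc₀ : 0 ≤ c) (hc₁ : c ≤ 1) :
    ((n : ℝ) - 2) * log n - n ≤ log (Gamma (n - c)) ∧
      log (Gamma (n - c)) ≤ ((n : ℝ) - 1) * log n := by
  obtain ⟨m, rfl⟩ : ∃ m, n = m + 2 := ⟨n - 2, by omega⟩
  have hm : (1 : ℝ) ≤ m := by exact_mod_cast (by omega : 1 ≤ m)
  push_cast
  have hmono := Gamma_strictMonoOn_Ici.monotoneOn
  have hlow : Gamma (m + 1) ≤ Gamma (m + 2 - c) :=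
    hmono (Set.mem_Ici.2 (by linarith)) (Set.mem_Ici.2 (by linarith)) (by linarith)
  have hupp : Gamma (m + 2 - c) ≤ Gamma ((m + 1 : ℕ) + 1) :=
    hmono (Set.mem_Ici.2 (by linarith)) (Set.mem_Ici.2 (by push_cast; linarith))
      (by push_cast; linarith)
  rw [Gamma_nat_eq_factorial] at hlow hupp
  have hGamma_pos : 0 < Gamma (m + 2 - c) := Gamma_pos_of_pos (by linarith)
  constructor
  · calc ((m : ℝ) + 2 - 2) * log (m + 2) - (m + 2) = m * log ((m + 2 : ℕ) : ℝ) - (m + 2 : ℕ) := by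
          push_cast; ring
      _ ≤ log (m ! : ℝ) := mul_log_sub_le_log_factorial (by omega)
      _ ≤ log (Gamma (m + 2 - c)) := log_le_log (by positivity) hlow
  · calc log (Gamma (m + 2 - c)) ≤ log ((m + 1)! : ℝ) := log_le_log hGamma_pos hupp
      _ ≤ (m + 1 : ℕ) * log ((m + 2 : ℕ) : ℝ) := log_factorial_le_mul_log (by omega)
      _ = ((m : ℝ) + 2 - 1) * log (m + 2) := by push_cast; ring

lemma sum_range_log_factorial_bounds (k : ℕ) :
    ((k : ℝ) ^ 2 - k) / 2 * log k - k ^ 2 ≤ ∑ j ∈ Finset.range k, log (j ! : ℝ) ∧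
      ∑ j ∈ Finset.range k, log (j ! : ℝ) ≤ ((k : ℝ) ^ 2 - k) / 2 * log k := by
  have hgauss : ∑ j ∈ Finset.range k, (j : ℝ) = ((k : ℝ) ^ 2 - k) / 2 := by
    induction k with
    | zero => simp
    | succ k ih => rw [Finset.sum_range_succ, ih]; push_cast; ring
  constructor
  · calc ((k : ℝ) ^ 2 - k) / 2 * log k - k ^ 2
          = ∑ j ∈ Finset.range k, ((j : ℝ) * log k - k) := by
          rw [Finset.sum_sub_distrib, ← Finset.sum_mul, hgauss, Finset.sum_const, Finset.card_range,
            nsmul_eq_mul]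
          ring
      _ ≤ _ := Finset.sum_le_sum fun j hj =>
          mul_log_sub_le_log_factorial (Finset.mem_range.1 hj).le
  · calc ∑ j ∈ Finset.range k, log (j ! : ℝ) ≤ ∑ j ∈ Finset.range k, (j : ℝ) * log k :=
          Finset.sum_le_sum fun j hj => log_factorial_le_mul_log (Finset.mem_range.1 hj).le
      _ = _ := by rw [← Finset.sum_mul, hgauss]

lemma isBigO_quadratic_add_log (a b c d : ℝ) :
    (fun k : ℕ => a + b * k + c * k ^ 2 + d * log k) =O[atTop] fun k : ℕ => (k : ℝ) ^ 2 := by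
  have hpow : ∀ p < 2, (fun k : ℕ => (k : ℝ) ^ p) =O[atTop] fun k : ℕ => (k : ℝ) ^ 2 := fun p hp =>
    ((isLittleO_pow_pow_atTop_of_lt hp).comp_tendsto tendsto_natCast_atTop_atTop).isBigO
  have hlog : (fun k : ℕ => log k) =O[atTop] fun k : ℕ => (k : ℝ) ^ 2 :=
    (isLittleO_log_id_atTop.comp_tendsto tendsto_natCast_atTop_atTop).isBigO.trans
      (by simpa using hpow 1 one_lt_two)
  simpa using ((((hpow 0 two_pos).const_mul_left a).add ((hpow 1 one_lt_two).const_mul_left b)).add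
    ((isBigO_refl _ _).const_mul_left c)).add (hlog.const_mul_left d)

lemma isLittleO_sq_sq_mul_log :
    (fun k : ℕ => (k : ℝ) ^ 2) =o[atTop] fun k : ℕ => (k : ℝ) ^ 2 * log k := by
  have hlog : (fun _ : ℕ => (1 : ℝ)) =o[atTop] fun k : ℕ => log (k : ℝ) :=
    (isLittleO_one_left_iff ℝ).2 <| tendsto_norm_atTop_atTop.comp <|
      tendsto_log_atTop.comp tendsto_natCast_atTop_atTop
  simpa using (isBigO_refl (fun k : ℕ => (k : ℝ) ^ 2) atTop).mul_isLittleO hlog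

lemma tendsto_div_of_isBigO_sub_mul {α : Type*} {l : Filter α} {f g h : α → ℝ} {c : ℝ}
    (hf : (fun x => f x - c * g x) =O[l] h) (hh : h =o[l] g) (hg : ∀ᶠ x in l, g x ≠ 0) :
    Tendsto (fun x => f x / g x) l (𝓝 c) := by
  have hlim := ((hf.trans_isLittleO hh).tendsto_div_nhds_zero).add_const c
  rw [zero_add] at hlim
  refine hlim.congr' ?_
  filter_upwards [hg] with x hx
  field_simp
  ring

lemma isBigO_log_Gamma_sq_sub {c : ℝ} (hc₀ : 0 ≤ c) (hc₁ : c ≤ 1) :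
    (fun k : ℕ => log (Gamma ((k : ℝ) ^ 2 - c)) - 2 * ((k : ℝ) ^ 2 * log k)) =O[atTop]
      fun k : ℕ => (k : ℝ) ^ 2 := by
  refine IsBigO.of_bound 5 ?_
  filter_upwards [eventually_ge_atTop 2] with k hk
  obtain ⟨hlow, hupp⟩ := log_Gamma_sub_bounds (n := k ^ 2) (by nlinarith) hc₀ hc₁
  push_cast at hlow hupp
  rw [log_pow, Nat.cast_ofNat] at hlow hupp
  have hk₁ : (1 : ℝ) ≤ k := by exact_mod_cast (by omega : 1 ≤ k)
  have hlog₀ : 0 ≤ log (k : ℝ) := log_nonneg hk₁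
  have hlog_le : log (k : ℝ) ≤ k := (log_le_sub_one_of_pos (by linarith)).trans (by linarith)
  rw [norm_of_nonneg (by positivity : (0 : ℝ) ≤ (k : ℝ) ^ 2), norm_eq_abs, abs_le]
  constructor <;> nlinarith

lemma isBigO_sum_range_log_factorial_sub :
    (fun k : ℕ => ∑ j ∈ Finset.range k, log (j ! : ℝ) - (k : ℝ) ^ 2 / 2 * log k) =O[atTop]
      fun k : ℕ => (k : ℝ) ^ 2 := by
  refine IsBigO.of_bound 2 ?_
  filter_upwards [eventually_ge_atTop 1] with k hk
  obtain ⟨hlow, hupp⟩ := sum_range_log_factorial_bounds k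
  have hk₁ : (1 : ℝ) ≤ k := by exact_mod_cast hk
  have hlog₀ : 0 ≤ log (k : ℝ) := log_nonneg hk₁
  have hlog_le : log (k : ℝ) ≤ k := (log_le_sub_one_of_pos (by linarith)).trans (by linarith)
  rw [norm_of_nonneg (by positivity : (0 : ℝ) ≤ (k : ℝ) ^ 2), norm_eq_abs, abs_le]
  constructor <;> nlinarith

lemma Gamma3_pos {a : ℝ} (ha : 1 < a) : 0 < Gamma3 a :=
  mul_pos (mul_pos (mul_pos (rpow_pos_of_pos pi_pos _) (Gamma_pos_of_pos (by linarith)))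
    (Gamma_pos_of_pos (by linarith))) (Gamma_pos_of_pos (by linarith))

lemma log_Gamma3 {a : ℝ} (ha : 1 < a) :
    log (Gamma3 a) =
      3 / 2 * log π + log (Gamma a) + log (Gamma (a - 1 / 2)) + log (Gamma (a - 1)) := by
  have h₀ := Gamma_pos_of_pos (by linarith : 0 < a)
  have h₁ := Gamma_pos_of_pos (by linarith : 0 < a - 1 / 2)
  have h₂ := Gamma_pos_of_pos (by linarith : 0 < a - 1)
  rw [Gamma3, log_mul (by positivity) h₂.ne', log_mul (by positivity) h₁.ne',
    log_mul (by positivity) h₀.ne', log_rpow pi_pos]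

lemma ballVol_pos {R : ℝ} (hR : 0 < R) {k : ℕ} (hk : 2 ≤ k) : 0 < ballVol R k := by
  have hk₂ : (1 : ℝ) < (k : ℝ) ^ 2 := by
    have : (2 : ℝ) ≤ k := by exact_mod_cast hk
    nlinarith
  have := Gamma3_pos hk₂
  unfold ballVol
  positivity

lemma log_ballVol {R : ℝ} (hR : 0 < R) {k : ℕ} (hk : 2 ≤ k) :
    log (ballVol R k) = log 8 + 3 * k ^ 2 * log π + 6 * k ^ 2 * log R
      - log (Gamma3 ((k : ℝ) ^ 2)) - 3 * (log 2 + 2 * log k) := by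
  have hk₂ : (1 : ℝ) < (k : ℝ) ^ 2 := by
    have : (2 : ℝ) ≤ k := by exact_mod_cast hk
    nlinarith
  have hΓ := Gamma3_pos hk₂
  have hk₀ : (0 : ℝ) < k := by linarith [show (2 : ℝ) ≤ k by exact_mod_cast hk]
  rw [ballVol, log_div (by positivity) (by positivity), log_mul (by positivity) (by positivity),
    log_mul (by positivity) (by positivity), log_rpow pi_pos, log_rpow hR,
    log_mul hΓ.ne' (by positivity), log_pow, log_mul (by norm_num) (by positivity), log_pow]
  push_cast
  ring

lemma suVol_pos {k : ℕ} (hk : 1 ≤ k) : 0 < suVol k := by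
  have hk₀ : (0 : ℝ) < k := by exact_mod_cast hk
  unfold suVol
  have := rpow_pos_of_pos (by positivity : (0 : ℝ) < 2 * π) ((k : ℝ) ^ 2 / 2 + k / 2 - 1)
  positivity

lemma log_suVol {k : ℕ} (hk : 1 ≤ k) :
    log (suVol k) = log k / 2 + ((k : ℝ) ^ 2 / 2 + k / 2 - 1) * log (2 * π)
      - ∑ j ∈ Finset.range k, log (j ! : ℝ) := by
  have hk₀ : (0 : ℝ) < k := by exact_mod_cast hk
  have hprod : ∏ j ∈ Finset.Icc 1 (k - 1), (j ! : ℝ) = ∏ j ∈ Finset.range k, (j ! : ℝ) := by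
    obtain ⟨m, rfl⟩ : ∃ m, k = m + 1 := ⟨k - 1, by omega⟩
    rw [Finset.prod_range_succ', Nat.factorial_zero, Nat.cast_one, mul_one, Nat.add_sub_cancel,
      ← Finset.Ico_add_one_right_eq_Icc, Finset.prod_Ico_eq_prod_range]
    simp [add_comm]
  rw [suVol, hprod, log_div (by positivity) (by positivity),
    log_mul (by positivity) (by positivity), log_sqrt hk₀.le, log_rpow (by positivity),
    log_prod fun j _ => by positivity]

lemma isBigO_log_ballVol_add {R : ℝ} (hR : 0 < R) :
    (fun k : ℕ => log (ballVol R k) + 6 * ((k : ℝ) ^ 2 * log k)) =O[atTop]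
      fun k : ℕ => (k : ℝ) ^ 2 := by
  refine ((((isBigO_quadratic_add_log (log 8 - 3 / 2 * log π - 3 * log 2) 0
      (3 * log π + 6 * log R) (-6)).sub (isBigO_log_Gamma_sq_sub le_rfl zero_le_one)).sub
      (isBigO_log_Gamma_sq_sub (c := 1 / 2) (by norm_num) (by norm_num))).sub
      (isBigO_log_Gamma_sq_sub zero_le_one le_rfl)).congr' ?_ EventuallyEq.rfl
  filter_upwards [eventually_ge_atTop 2] with k hk
  have hk₂ : (1 : ℝ) < (k : ℝ) ^ 2 := by
    have : (2 : ℝ) ≤ k := by exact_mod_cast hk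
    nlinarith
  rw [log_ballVol hR hk, log_Gamma3 hk₂, sub_zero]
  ring

lemma isBigO_log_suVol_add :
    (fun k : ℕ => log (suVol k) + 1 / 2 * ((k : ℝ) ^ 2 * log k)) =O[atTop]
      fun k : ℕ => (k : ℝ) ^ 2 := by
  refine ((isBigO_quadratic_add_log (-log (2 * π)) (log (2 * π) / 2) (log (2 * π) / 2)
      (1 / 2)).sub isBigO_sum_range_log_factorial_sub).congr' ?_ EventuallyEq.rfl
  filter_upwards [eventually_ge_atTop 1] with k hk
  rw [log_suVol hk]
  ring

/-- The effective moduli-space weight `B(k)/V(k)` decays like `k^{−(11/2)k²}`: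
`lim_{k→∞} (log(B(k)/V(k)))/(k² log k) = −11/2`. -/
theorem effective_weight_decay (R : ℝ) (hR : 0 < R) :
    Tendsto (fun k : ℕ =>
        Real.log (ballVol R k / suVol k) / ((k : ℝ) ^ 2 * Real.log (k : ℝ)))
      atTop (nhds (-11 / 2)) := by
  refine tendsto_div_of_isBigO_sub_mul ?_ isLittleO_sq_sq_mul_log ?_
  · refine ((isBigO_log_ballVol_add hR).sub isBigO_log_suVol_add).congr' ?_ EventuallyEq.rfl
    filter_upwards [eventually_ge_atTop 2] with k hk
    rw [log_div (ballVol_pos hR hk).ne' (suVol_pos (by omega)).ne']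
    ring
  · filter_upwards [eventually_ge_atTop 2] with k hk
    have : 0 < log (k : ℝ) := log_pos (by exact_mod_cast hk)
    positivity
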